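/- The softmax function on ℝ^L is Lipschitz: there exists a constant C (one may take C = 2) such that for all s, t ∈ ℝ^L, ‖softmax(s) − softmax(t)‖ ≤ C ‖s − t‖. -/

import Mathlib

/-!
At `x`, softmax has Jacobian `diag p - p pᵀ` with `p = softmax x`. Since `p` is a probability
vector, `‖p‖₂ ≤ ‖p‖₁ = 1`, so the diagonal part and the rank-one part both have operator norm at
most `1`, and the mean value inequality gives the Lipschitz constant `2`.
-/

open Real Matrix InnerProductSpace
open scoped RealInnerProductSpace

/-- The softmax map on `ℝ^L` (with the Euclidean norm). -/
noncomputable def smax (L : ℕ) (s : EuclideanSpace ℝ (Fin L)) : EuclideanSpace ℝ (Fin L) :=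
  WithLp.toLp 2 (fun j => Real.exp (s j) / ∑ l, Real.exp (s l))

namespace EuclideanSpace

variable {ι : Type*} [Fintype ι]

theorem norm_le_one_of_nonneg_of_sum_eq_one {p : EuclideanSpace ℝ ι} (h0 : ∀ j, 0 ≤ p j)
    (h1 : ∑ j, p j = 1) : ‖p‖ ≤ 1 := by
  rw [← sq_le_one_iff₀ (norm_nonneg p), EuclideanSpace.norm_sq_eq]
  calc ∑ j, ‖p j‖ ^ 2 = ∑ j, p j ^ 2 := by simp
    _ ≤ (∑ j, p j) ^ 2 := Finset.sum_sq_le_sq_sum_of_nonneg fun j _ => h0 j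
    _ = 1 := by rw [h1, one_pow]

noncomputable def softmax (x : EuclideanSpace ℝ ι) : EuclideanSpace ℝ ι :=
  WithLp.toLp 2 fun j => exp (x j) / ∑ l, exp (x l)

noncomputable def softmaxJacobian [DecidableEq ι] (p : EuclideanSpace ℝ ι) :
    EuclideanSpace ℝ ι →L[ℝ] EuclideanSpace ℝ ι :=
  toEuclideanCLM (𝕜 := ℝ) (diagonal p) - rankOne ℝ p p

theorem softmax_nonneg (x : EuclideanSpace ℝ ι) (j : ι) : 0 ≤ softmax x j := by
  unfold softmax
  positivity

theorem sum_softmax [Nonempty ι] (x : EuclideanSpace ℝ ι) : ∑ j, softmax x j = 1 := by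
  simp only [softmax, PiLp.toLp_apply, ← Finset.sum_div]
  exact div_self (by positivity)

theorem norm_softmax_le_one [Nonempty ι] (x : EuclideanSpace ℝ ι) : ‖softmax x‖ ≤ 1 :=
  norm_le_one_of_nonneg_of_sum_eq_one (softmax_nonneg x) (sum_softmax x)

theorem inner_softmax (x v : EuclideanSpace ℝ ι) :
    ⟪softmax x, v⟫ = (∑ l, exp (x l) * v l) / ∑ l, exp (x l) := by
  simp only [softmax, PiLp.inner_apply, Finset.sum_div]
  exact Finset.sum_congr rfl fun l _ => by simp only [RCLike.inner_apply, conj_trivial]; ring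

theorem norm_softmaxJacobian_le [DecidableEq ι] (p : EuclideanSpace ℝ ι) :
    ‖softmaxJacobian p‖ ≤ ‖p‖ + ‖p‖ * ‖p‖ := by
  have hdiag : ‖toEuclideanCLM (𝕜 := ℝ) (diagonal p)‖ ≤ ‖p‖ := by
    open scoped Matrix.Norms.L2Operator in
    rw [l2_opNorm_toEuclideanCLM, l2_opNorm_diagonal]
    exact (pi_norm_le_iff_of_nonneg (norm_nonneg p)).2 (PiLp.norm_apply_le p)
  calc ‖softmaxJacobian p‖ ≤ _ := norm_sub_le _ _
    _ ≤ ‖p‖ + ‖p‖ * ‖p‖ := by rw [norm_rankOne]; gcongr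

theorem hasFDerivAt_softmax [Nonempty ι] [DecidableEq ι] (x : EuclideanSpace ℝ ι) :
    HasFDerivAt softmax (softmaxJacobian (softmax x)) x := by
  rw [← hasFDerivWithinAt_univ, hasFDerivWithinAt_euclidean]
  intro j
  have hexp (l : ι) : HasFDerivAt (fun y : EuclideanSpace ℝ ι => exp (y l))
      (exp (x l) • PiLp.proj 2 (fun _ => ℝ) l) x :=
    (PiLp.hasFDerivAt_apply 2 x l).exp
  have hZ : ∑ l, exp (x l) ≠ 0 := by positivity
  have hinv := (hasDerivAt_inv hZ).comp_hasFDerivAt x (HasFDerivAt.fun_sum fun l _ => hexp l)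
  have hfun : (fun y : EuclideanSpace ℝ ι => softmax y j) =
      fun y => exp (y j) * (∑ l, exp (y l))⁻¹ :=
    funext fun y => div_eq_mul_inv _ _
  rw [hfun]
  refine (((hexp j).mul hinv).congr_fderiv ?_).hasFDerivWithinAt
  ext v
  simp only [softmaxJacobian, inner_softmax, ContinuousLinearMap.comp_sub, _root_.sub_apply,
    ContinuousLinearMap.comp_apply, ofLp_toEuclideanCLM, mulVec_diagonal, rankOne_apply,
    map_smul, PiLp.proj_apply, smul_eq_mul, Function.comp_apply, _root_.add_apply,
    _root_.smul_apply, _root_.sum_apply, neg_smul, smul_neg, _root_.neg_apply]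
  simp only [softmax, PiLp.toLp_apply]
  field_simp
  ring

theorem lipschitzWith_softmax : LipschitzWith 2 (softmax : EuclideanSpace ℝ ι → _) := by
  classical
  rcases isEmpty_or_nonempty ι with hι | hι
  · exact LipschitzWith.of_dist_le_mul fun x y => by simp [Subsingleton.elim x y]
  refine lipschitzOnWith_univ.1 <| convex_univ.lipschitzOnWith_of_nnnorm_hasFDerivWithin_le
    (fun x _ => (hasFDerivAt_softmax x).hasFDerivWithinAt) fun x _ => ?_
  rw [← NNReal.coe_le_coe, coe_nnnorm]
  have hp := norm_softmax_le_one x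
  calc ‖softmaxJacobian (softmax x)‖ ≤ ‖softmax x‖ + ‖softmax x‖ * ‖softmax x‖ :=
        norm_softmaxJacobian_le _
    _ ≤ 1 + 1 * 1 := by gcongr
    _ = 2 := by norm_num

end EuclideanSpace

/-- the softmax function is Lipschitz with constant `C = 2` in the
Euclidean norm. -/
theorem stmt11 (L : ℕ) (s t : EuclideanSpace ℝ (Fin L)) :
    ‖smax L s - smax L t‖ ≤ 2 * ‖s - t‖ := by
  exact_mod_cast (EuclideanSpace.lipschitzWith_softmax (ι := Fin L)).norm_sub_le s t
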